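/- J-unitarity of Θ on the imaginary axis: For every λ ∈ ℂ with Re λ = 0 such that λI_n − A is invertible, Θ(λ) J Θ(λ)ᴴ = J and Θ(λ)ᴴ J Θ(λ) = J. -/

import Mathlib

open Matrix
open scoped Matrix

/-- The signature matrix `J = diag(I_p, −I_m)`. -/
def signatureJ (p m : ℕ) : Matrix (Fin p ⊕ Fin m) (Fin p ⊕ Fin m) ℂ :=
  Matrix.fromBlocks 1 0 0 (-1)

/-- The realization `Θ(λ) = I − C (λI − A)⁻¹ Γ⁻¹ Cᴴ J`. -/
noncomputable def ThetaRealization (n p m : ℕ) (A : Matrix (Fin n) (Fin n) ℂ)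
    (C : Matrix (Fin p ⊕ Fin m) (Fin n) ℂ) (Γ : Matrix (Fin n) (Fin n) ℂ) (lam : ℂ) :
    Matrix (Fin p ⊕ Fin m) (Fin p ⊕ Fin m) ℂ :=
  1 - C * (lam • (1 : Matrix (Fin n) (Fin n) ℂ) - A)⁻¹ * Γ⁻¹ * Cᴴ * signatureJ p m

/-
Write `K := (λI − A)⁻¹Γ⁻¹`, so that `Θ(λ) = I − X J` with `X := C K Cᴴ`. On the imaginary axis
`(λI − A)ᴴ = −λI − Aᴴ`, and the Lyapunov identity becomes `Cᴴ J C = K⁻¹ + (Kᴴ)⁻¹`. Sandwiching it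
between `K` and `Kᴴ` (in either order) gives `X J Xᴴ = X + Xᴴ = Xᴴ J X`, and for any `X` these two
identities are exactly what makes `I − X J` `J`-unitary, because `J² = I`.
-/

section JUnitary

variable {R : Type*} [Ring R] [StarRing R] {X J : R}

theorem one_sub_mul_mul_mul_star_eq_of_mul_mul_star_eq_add (hJ : IsSelfAdjoint J)
    (hJJ : J * J = 1) (h : X * J * star X = X + star X) :
    (1 - X * J) * J * star (1 - X * J) = J := by
  have hstar : star (1 - X * J) = 1 - J * star X := by
    rw [star_sub, star_one, star_mul, hJ.star_eq]
  have expand : (1 - X * J) * J * (1 - J * star X)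
      = J - X * (J * J) - (J * J) * star X + X * J * ((J * J) * star X) := by noncomm_ring
  rw [hstar, expand, hJJ, mul_one, one_mul, h]
  abel

theorem star_one_sub_mul_mul_mul_eq_of_star_mul_mul_eq_add (hJ : IsSelfAdjoint J)
    (h : star X * J * X = X + star X) :
    star (1 - X * J) * J * (1 - X * J) = J := by
  have hstar : star (1 - X * J) = 1 - J * star X := by
    rw [star_sub, star_one, star_mul, hJ.star_eq]
  have expand : (1 - J * star X) * J * (1 - X * J)
      = J - J * (X * J) - J * (star X * J) + J * ((star X * J * X) * J) := by noncomm_ring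
  rw [hstar, expand, h]
  noncomm_ring

end JUnitary

section Congruence

variable {α ι κ : Type*} [CommRing α] [StarRing α] [Fintype ι] [DecidableEq ι] [Fintype κ]

theorem mul_inv_add_conjTranspose_inv_mul_conjTranspose {K : Matrix ι ι α} (hK : IsUnit K.det) :
    K * (K⁻¹ + Kᴴ⁻¹) * Kᴴ = K + Kᴴ := by
  have hKH : IsUnit Kᴴ.det := by rw [det_conjTranspose]; exact hK.star
  rw [Matrix.mul_add, Matrix.add_mul, mul_nonsing_inv K hK, one_mul, Matrix.mul_assoc,
    nonsing_inv_mul Kᴴ hKH, mul_one]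
  exact add_comm _ _

theorem conjTranspose_mul_inv_add_conjTranspose_inv_mul {K : Matrix ι ι α} (hK : IsUnit K.det) :
    Kᴴ * (K⁻¹ + Kᴴ⁻¹) * K = K + Kᴴ := by
  have hKH : IsUnit Kᴴ.det := by rw [det_conjTranspose]; exact hK.star
  have h := mul_inv_add_conjTranspose_inv_mul_conjTranspose hKH
  rwa [conjTranspose_conjTranspose, add_comm Kᴴ⁻¹, add_comm Kᴴ] at h

theorem inv_mul_inv_inv_add_conjTranspose_inv {B Γ : Matrix ι ι α} (hB : IsUnit B.det)
    (hΓ : IsUnit Γ.det) (hΓH : Γ.IsHermitian) :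
    (B⁻¹ * Γ⁻¹)⁻¹ + (B⁻¹ * Γ⁻¹)ᴴ⁻¹ = Γ * B + Bᴴ * Γ := by
  rw [← conjTranspose_nonsing_inv, Matrix.mul_inv_rev, nonsing_inv_nonsing_inv B hB,
    nonsing_inv_nonsing_inv Γ hΓ, conjTranspose_mul, hΓH.eq]

variable {K : Matrix ι ι α} {C : Matrix κ ι α} {J : Matrix κ κ α}

theorem mul_mul_conjTranspose_eq_self_add_conjTranspose (hK : IsUnit K.det)
    (hC : Cᴴ * J * C = K⁻¹ + Kᴴ⁻¹) :
    C * K * Cᴴ * J * (C * K * Cᴴ)ᴴ = C * K * Cᴴ + (C * K * Cᴴ)ᴴ := by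
  calc C * K * Cᴴ * J * (C * K * Cᴴ)ᴴ = C * (K * (Cᴴ * J * C) * Kᴴ) * Cᴴ := by
        simp only [conjTranspose_mul, conjTranspose_conjTranspose, Matrix.mul_assoc]
    _ = C * K * Cᴴ + (C * K * Cᴴ)ᴴ := by
        rw [hC, mul_inv_add_conjTranspose_inv_mul_conjTranspose hK]
        simp only [conjTranspose_mul, conjTranspose_conjTranspose, Matrix.mul_add,
          Matrix.add_mul, Matrix.mul_assoc]

theorem conjTranspose_mul_mul_eq_self_add_conjTranspose (hK : IsUnit K.det)
    (hC : Cᴴ * J * C = K⁻¹ + Kᴴ⁻¹) :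
    (C * K * Cᴴ)ᴴ * J * (C * K * Cᴴ) = C * K * Cᴴ + (C * K * Cᴴ)ᴴ := by
  calc (C * K * Cᴴ)ᴴ * J * (C * K * Cᴴ) = C * (Kᴴ * (Cᴴ * J * C) * K) * Cᴴ := by
        simp only [conjTranspose_mul, conjTranspose_conjTranspose, Matrix.mul_assoc]
    _ = C * K * Cᴴ + (C * K * Cᴴ)ᴴ := by
        rw [hC, conjTranspose_mul_inv_add_conjTranspose_inv_mul hK]
        simp only [conjTranspose_mul, conjTranspose_conjTranspose, Matrix.mul_add,
          Matrix.add_mul, Matrix.mul_assoc]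

end Congruence

theorem lyapunov_smul_one_sub_of_re_eq_zero {n : Type*} [Fintype n] [DecidableEq n]
    (A Γ : Matrix n n ℂ) {lam : ℂ} (hre : lam.re = 0) :
    Γ * (lam • 1 - A) + (lam • 1 - A)ᴴ * Γ = -(Γ * A + Aᴴ * Γ) := by
  have hstar : star lam = -lam := by simp [Complex.ext_iff, hre]
  rw [conjTranspose_sub, conjTranspose_smul, conjTranspose_one, hstar]
  simp only [mul_sub, sub_mul, mul_smul_comm, smul_mul_assoc, Matrix.mul_one, Matrix.one_mul]
  module

theorem signatureJ_isHermitian (p m : ℕ) : (signatureJ p m).IsHermitian := by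
  simp [IsHermitian, signatureJ, fromBlocks_conjTranspose]

theorem signatureJ_mul_self (p m : ℕ) : signatureJ p m * signatureJ p m = 1 := by
  simp [signatureJ, fromBlocks_multiply, ← fromBlocks_one]

/-- **`J`-unitarity of `Θ` on the imaginary axis**: for purely imaginary `λ` at which
`λI − A` is invertible, `Θ(λ) J Θ(λ)ᴴ = J` and `Θ(λ)ᴴ J Θ(λ) = J`. -/
theorem theta_J_unitary_on_imaginary_axis
    (n p m : ℕ) (A : Matrix (Fin n) (Fin n) ℂ)
    (C : Matrix (Fin p ⊕ Fin m) (Fin n) ℂ) (Γ : Matrix (Fin n) (Fin n) ℂ)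
    (hΓH : Γ.IsHermitian) (hΓinv : IsUnit Γ.det)
    (hLyap : Γ * A + Aᴴ * Γ = -(Cᴴ * signatureJ p m * C))
    (lam : ℂ) (hre : lam.re = 0)
    (hlam : IsUnit (lam • (1 : Matrix (Fin n) (Fin n) ℂ) - A).det) :
    ThetaRealization n p m A C Γ lam * signatureJ p m *
        (ThetaRealization n p m A C Γ lam)ᴴ = signatureJ p m ∧
      (ThetaRealization n p m A C Γ lam)ᴴ * signatureJ p m *
        ThetaRealization n p m A C Γ lam = signatureJ p m := by
  set K := (lam • (1 : Matrix (Fin n) (Fin n) ℂ) - A)⁻¹ * Γ⁻¹ with hKdef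
  have hK : IsUnit K.det := by
    rw [det_mul]
    exact (isUnit_nonsing_inv_det _ hlam).mul (isUnit_nonsing_inv_det _ hΓinv)
  have hC : Cᴴ * signatureJ p m * C = K⁻¹ + Kᴴ⁻¹ := by
    rw [inv_mul_inv_inv_add_conjTranspose_inv hlam hΓinv hΓH,
      lyapunov_smul_one_sub_of_re_eq_zero A Γ hre, hLyap, neg_neg]
  have hΘ : ThetaRealization n p m A C Γ lam = 1 - C * K * Cᴴ * signatureJ p m := by
    simp only [ThetaRealization, hKdef, Matrix.mul_assoc]
  have hJ : IsSelfAdjoint (signatureJ p m) := signatureJ_isHermitian p m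
  rw [hΘ]
  exact ⟨one_sub_mul_mul_mul_star_eq_of_mul_mul_star_eq_add hJ (signatureJ_mul_self p m)
      (mul_mul_conjTranspose_eq_self_add_conjTranspose hK hC),
    star_one_sub_mul_mul_mul_eq_of_star_mul_mul_eq_add hJ
      (conjTranspose_mul_mul_eq_self_add_conjTranspose hK hC)⟩
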